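/- arXiv:1004.1386 — 4 statements merged into one kernel-verified Lean document; each statement's English description precedes it below -/
import Mathlib

section
/- Let H_A, H_B be separable Hilbert spaces, ρ_AB a positive trace-class operator on H_A ⊗ H_B, and σ_B a positive trace-class operator on H_B. Define Λ(ρ_AB|σ_B) = inf{λ ∈ ℝ : λ·(id_A ⊗ σ_B) ≥ ρ_AB} (with inf ∅ = +∞). Then Λ is lower semicontinuous in the pair (ρ_AB, σ_B) with respect to the product of the trace-norm topologies; equivalently, every lower level set {(ρ, σ) : Λ(ρ|σ) ≤ t} is closed. -/
open scoped InnerProductSpace ComplexOrder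
open ContinuousLinearMap Filter Topology

set_option synthInstance.maxHeartbeats 1000000
set_option maxHeartbeats 1600000

noncomputable section

/-- The rank-one operator `|x⟩⟨y|`. -/
def dyad {H : Type*} [NormedAddCommGroup H] [InnerProductSpace ℂ H] (x y : H) :
    H →L[ℂ] H := (innerSL ℂ y).smulRight x

/-- The trace of an operator along a Hilbert basis (sum of real parts of the diagonal). -/
def trAlong {H : Type*} [NormedAddCommGroup H] [InnerProductSpace ℂ H] {ι : Type*}
    (e : HilbertBasis ι ℂ H) (T : H →L[ℂ] H) : ℝ :=
  ∑' i, RCLike.re ⟪e i, T (e i)⟫_ℂ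

/-- The complex trace of an operator along a Hilbert basis. -/
def trCAlong {H : Type*} [NormedAddCommGroup H] [InnerProductSpace ℂ H] {ι : Type*}
    (e : HilbertBasis ι ℂ H) (T : H →L[ℂ] H) : ℂ :=
  ∑' i, ⟪e i, T (e i)⟫_ℂ

/-- The absolute value `√(T†T)` of a bounded operator. -/
def absOp {H : Type*} [NormedAddCommGroup H] [InnerProductSpace ℂ H] [CompleteSpace H]
    (T : H →L[ℂ] H) : H →L[ℂ] H := CFC.sqrt (ContinuousLinearMap.adjoint T * T)

/-- The trace norm `‖T‖₁ = tr √(T†T)` along a Hilbert basis. -/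
def trNormAlong {H : Type*} [NormedAddCommGroup H] [InnerProductSpace ℂ H] [CompleteSpace H]
    {ι : Type*} (e : HilbertBasis ι ℂ H) (T : H →L[ℂ] H) : ℝ :=
  trAlong e (absOp T)

/-- `T` is trace class (w.r.t. the Hilbert basis `e`): the diagonal sum of `√(T†T)` converges. -/
def IsTraceClass {H : Type*} [NormedAddCommGroup H] [InnerProductSpace ℂ H] [CompleteSpace H]
    {ι : Type*} (e : HilbertBasis ι ℂ H) (T : H →L[ℂ] H) : Prop :=
  Summable fun i => RCLike.re ⟪e i, absOp T (e i)⟫_ℂ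

/-- An orthogonal projection: a self-adjoint idempotent bounded operator. -/
def IsOrthoProj {H : Type*} [NormedAddCommGroup H] [InnerProductSpace ℂ H] [CompleteSpace H]
    (P : H →L[ℂ] H) : Prop := IsSelfAdjoint P ∧ IsIdempotentElem P

/-- A realization of the Hilbert-space tensor product `H = H_A ⊗ H_B`: a bilinear map
`tmul` compatible with the inner products, with total range, together with the induced
tensor product `map` of bounded operators. -/
structure HilbertTensor (HA HB H : Type*) [NormedAddCommGroup HA] [InnerProductSpace ℂ HA]
    [NormedAddCommGroup HB] [InnerProductSpace ℂ HB]
    [NormedAddCommGroup H] [InnerProductSpace ℂ H] where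
  tmul : HA →ₗ[ℂ] HB →ₗ[ℂ] H
  inner_tmul : ∀ (a a' : HA) (b b' : HB),
    ⟪tmul a b, tmul a' b'⟫_ℂ = ⟪a, a'⟫_ℂ * ⟪b, b'⟫_ℂ
  dense_span : Dense ((Submodule.span ℂ {z : H | ∃ a b, z = tmul a b} : Submodule ℂ H) : Set H)
  map : (HA →L[ℂ] HA) → (HB →L[ℂ] HB) → (H →L[ℂ] H)
  map_tmul : ∀ (S : HA →L[ℂ] HA) (T : HB →L[ℂ] HB) (a : HA) (b : HB),
    map S T (tmul a b) = tmul (S a) (T b)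

/-- `Λ(ρ_AB|B) = inf { tr σ̃ : σ̃ ≥ 0 trace class, id_A ⊗ σ̃ ≥ ρ_AB }`, valued in `EReal`
(the infimum of the empty set being `⊤`, i.e. `H_min = -∞`). -/
def LamB {HA HB H : Type*} [NormedAddCommGroup HA] [InnerProductSpace ℂ HA]
    [NormedAddCommGroup HB] [InnerProductSpace ℂ HB] [CompleteSpace HB]
    [NormedAddCommGroup H] [InnerProductSpace ℂ H] [CompleteSpace H]
    (TP : HilbertTensor HA HB H) {κ : Type*} (f : HilbertBasis κ ℂ HB)
    (ρ : H →L[ℂ] H) : EReal :=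
  sInf {x : EReal | ∃ σ : HB →L[ℂ] HB, σ.IsPositive ∧ IsTraceClass f σ ∧
    ρ ≤ TP.map 1 σ ∧ x = (trAlong f σ : EReal)}

/-- `Λ(ρ_AB|σ_B) = inf { λ ∈ ℝ : λ·(id_A ⊗ σ_B) ≥ ρ_AB }`, valued in `EReal`. -/
def LamCond {HA HB H : Type*} [NormedAddCommGroup HA] [InnerProductSpace ℂ HA]
    [NormedAddCommGroup HB] [InnerProductSpace ℂ HB]
    [NormedAddCommGroup H] [InnerProductSpace ℂ H] [CompleteSpace H]
    (TP : HilbertTensor HA HB H) (ρ : H →L[ℂ] H) (σ : HB →L[ℂ] HB) : EReal :=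
  sInf {x : EReal | ∃ l : ℝ, x = (l : EReal) ∧ ρ ≤ l • TP.map 1 σ}

/-- The generalized fidelity `F̄(ρ,σ) = ‖√ρ√σ‖₁ + √((1-tr ρ)(1-tr σ))`. -/
def genFid {H : Type*} [NormedAddCommGroup H] [InnerProductSpace ℂ H] [CompleteSpace H]
    {ι : Type*} (e : HilbertBasis ι ℂ H) (ρ σ : H →L[ℂ] H) : ℝ :=
  trNormAlong e (CFC.sqrt ρ * CFC.sqrt σ) +
    Real.sqrt ((1 - trAlong e ρ) * (1 - trAlong e σ))

/-- The purified distance `P(ρ,σ) = √(1 - F̄(ρ,σ)²)`. -/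
def purifiedDist {H : Type*} [NormedAddCommGroup H] [InnerProductSpace ℂ H] [CompleteSpace H]
    {ι : Type*} (e : HilbertBasis ι ℂ H) (ρ σ : H →L[ℂ] H) : ℝ :=
  Real.sqrt (1 - (genFid e ρ σ) ^ 2)

/-- Positivity of a square matrix of operators, viewed as an operator on `Hⁿ`. -/
def MatPos {H : Type*} [NormedAddCommGroup H] [InnerProductSpace ℂ H] (n : ℕ)
    (M : Matrix (Fin n) (Fin n) (H →L[ℂ] H)) : Prop :=
  ∀ v : Fin n → H, 0 ≤ ∑ i, ∑ j, ⟪v i, M i j (v j)⟫_ℂ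

/-- Complete positivity of a linear map on operators. -/
def IsCPMap {H : Type*} [NormedAddCommGroup H] [InnerProductSpace ℂ H]
    (E : (H →L[ℂ] H) →ₗ[ℂ] (H →L[ℂ] H)) : Prop :=
  ∀ (n : ℕ) (M : Matrix (Fin n) (Fin n) (H →L[ℂ] H)),
    MatPos n M → MatPos n (fun i j => E (M i j))

end

/-!
Trace-norm convergence of positive trace-class operators implies operator-norm convergence,
because `‖T‖ ≤ ‖T‖₁`. The delicate point is that `trNormAlong` is a `tsum`, hence `0` off
trace class, so one must know that `A - B` is trace class for positive trace-class `A, B`.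
This follows from `tr T⁺ ≤ tr A` whenever `T ≤ A`, proved by conjugating with a continuous
approximation `r = h(T)` of the spectral projection of `T` onto `(0, ∞)`.
Next, `σ ↦ id_A ⊗ σ` is a unital star homomorphism of C⋆-algebras, hence positive and
contractive, so `id_A ⊗ σ_k → id_A ⊗ σ` in norm. Finally, `ρ ≤ λ (id_A ⊗ σ)` is preserved
under norm limits since the positive cone of a C⋆-algebra is closed.
-/

section CStarAlgebra

variable {A : Type*} [CStarAlgebra A] [PartialOrder A] [StarOrderedRing A]

lemma exists_posPart_le_conj_add {a b : A} (ha : IsSelfAdjoint a) (hab : a ≤ b) {ε : ℝ}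
    (hε : 0 < ε) :
    ∃ r : A, IsSelfAdjoint r ∧ ‖r‖ ≤ 1 ∧ a⁺ ≤ r * b * r + algebraMap ℝ A ε := by
  -- `h = 0` on `(-∞, 0]`, `h = 1` on `[ε, ∞)`: a continuous stand-in for the indicator of `(0, ∞)`
  set h : ℝ → ℝ := fun x => min 1 (x⁺ / ε)
  have key : ∀ x : ℝ, x⁺ ≤ h x * x * h x + ε := by
    intro x
    rcases le_total x 0 with hx | hx
    · simp [h, posPart_eq_zero.mpr hx, hε.le]
    · rcases le_total ε x with hxε | hxε
      · have : h x = 1 := min_eq_left ((one_le_div hε).mpr (by rwa [posPart_eq_self.mpr hx]))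
        simp [this, posPart_eq_self.mpr hx, hε.le]
      · have : 0 ≤ h x * x * h x := by
          have : 0 ≤ h x := le_min zero_le_one (by positivity)
          positivity
        rw [posPart_eq_self.mpr hx]
        linarith
  refine ⟨cfc h a, cfc_predicate h a, ?_, ?_⟩
  · refine norm_cfc_le zero_le_one fun x _ => ?_
    rw [Real.norm_of_nonneg (le_min zero_le_one (by positivity))]
    exact min_le_left _ _
  calc a⁺ = cfc (·⁺ : ℝ → ℝ) a := by rw [CFC.posPart_def, cfcₙ_eq_cfc]
    _ ≤ cfc (fun x => h x * x * h x + ε) a := cfc_mono fun x _ => key x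
    _ = cfc h a * a * cfc h a + algebraMap ℝ A ε := by
      rw [cfc_add .., cfc_const .., cfc_mul .., cfc_mul .., cfc_id' ℝ a]
    _ ≤ cfc h a * b * cfc h a + algebraMap ℝ A ε := by
      gcongr
      simpa [(cfc_predicate h a).star_eq] using star_left_conjugate_le_conjugate hab (cfc h a)

end CStarAlgebra

lemma HilbertBasis.hasSum_norm_inner_sq {E : Type*} [NormedAddCommGroup E]
    [InnerProductSpace ℂ E] {ι : Type*} (b : HilbertBasis ι ℂ E) (x : E) :
    HasSum (fun i => ‖⟪b i, x⟫_ℂ‖ ^ 2) (‖x‖ ^ 2) := by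
  have h := b.hasSum_inner_mul_inner x x
  have hterm : ∀ i, ⟪x, b i⟫_ℂ * ⟪b i, x⟫_ℂ = (‖⟪b i, x⟫_ℂ‖ : ℂ) ^ 2 := fun i => by
    rw [← inner_conj_symm, RCLike.conj_mul]
    rfl
  simp only [hterm, inner_self_eq_norm_sq_to_K] at h
  rw [← Complex.hasSum_ofReal]
  push_cast
  exact h

lemma re_inner_apply_self_le_of_le {E : Type*} [NormedAddCommGroup E] [InnerProductSpace ℂ E]
    {X Y : E →L[ℂ] E} (hXY : X ≤ Y) (x : E) :
    RCLike.re ⟪x, X x⟫_ℂ ≤ RCLike.re ⟪x, Y x⟫_ℂ := by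
  have := hXY.re_inner_nonneg_right x
  rwa [sub_apply, inner_sub_right, map_sub, sub_nonneg] at this

section TraceClass

variable {E : Type*} [NormedAddCommGroup E] [InnerProductSpace ℂ E] [CompleteSpace E]
  {ι : Type*} (e : HilbertBasis ι ℂ E)

lemma IsSelfAdjoint.inner_apply_left {T : E →L[ℂ] E} (hT : IsSelfAdjoint T) (x y : E) :
    ⟪T x, y⟫_ℂ = ⟪x, T y⟫_ℂ :=
  hT.isSymmetric x y

lemma re_inner_self_apply_eq_norm_sqrt_apply_sq {A : E →L[ℂ] E} (hA : 0 ≤ A) (x : E) :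
    RCLike.re ⟪x, A x⟫_ℂ = ‖CFC.sqrt A x‖ ^ 2 := by
  have hsa : IsSelfAdjoint (CFC.sqrt A) := .of_nonneg (CFC.sqrt_nonneg A)
  conv_lhs => rw [← CFC.sqrt_mul_sqrt_self A hA, mul_apply_eq_comp, ← hsa.inner_apply_left,
    inner_self_eq_norm_sq]

lemma norm_apply_sq_le_of_isSelfAdjoint {C : E →L[ℂ] E} (hC : IsSelfAdjoint C)
    (hsum : Summable fun i => ‖C (e i)‖ ^ 2) (x : E) :
    ‖C x‖ ^ 2 ≤ ‖x‖ ^ 2 * ∑' i, ‖C (e i)‖ ^ 2 := by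
  rw [← (e.hasSum_norm_inner_sq (C x)).tsum_eq, ← tsum_mul_left]
  refine Summable.tsum_le_tsum (fun i => ?_) (e.hasSum_norm_inner_sq _).summable
    (hsum.mul_left _)
  rw [← hC.inner_apply_left, mul_comm, ← mul_pow]
  exact pow_le_pow_left₀ (norm_nonneg _) (norm_inner_le_norm _ _) 2

lemma sum_norm_apply_apply_sq_le {C R : E →L[ℂ] E} (hC : IsSelfAdjoint C) (hR : IsSelfAdjoint R)
    (hsum : Summable fun j => ‖C (e j)‖ ^ 2) (F : Finset ι) :
    ∑ i ∈ F, ‖C (R (e i))‖ ^ 2 ≤ ‖R‖ ^ 2 * ∑' j, ‖C (e j)‖ ^ 2 := by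
  have hparseval : ∀ i, HasSum (fun j => ‖⟪e i, R (C (e j))⟫_ℂ‖ ^ 2) (‖C (R (e i))‖ ^ 2) := by
    intro i
    convert e.hasSum_norm_inner_sq (C (R (e i))) using 3 with j
    rw [← hC.inner_apply_left, ← hR.inner_apply_left, norm_inner_symm]
  have hbessel : ∀ j, ∑ i ∈ F, ‖⟪e i, R (C (e j))⟫_ℂ‖ ^ 2 ≤ ‖R‖ ^ 2 * ‖C (e j)‖ ^ 2 := by
    intro j
    calc ∑ i ∈ F, ‖⟪e i, R (C (e j))⟫_ℂ‖ ^ 2 ≤ ‖R (C (e j))‖ ^ 2 :=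
          e.orthonormal.sum_inner_products_le _
      _ ≤ ‖R‖ ^ 2 * ‖C (e j)‖ ^ 2 := by
          rw [← mul_pow]
          exact pow_le_pow_left₀ (norm_nonneg _) (R.le_opNorm _) 2
  rw [← tsum_mul_left]
  exact hasSum_le hbessel (hasSum_sum fun i _ => hparseval i) (hsum.mul_left _).hasSum

lemma norm_le_trAlong_of_nonneg {A : E →L[ℂ] E} (hA : 0 ≤ A)
    (hsum : Summable fun i => RCLike.re ⟪e i, A (e i)⟫_ℂ) : ‖A‖ ≤ trAlong e A := by
  set C := CFC.sqrt A
  have hC : IsSelfAdjoint C := .of_nonneg (CFC.sqrt_nonneg A)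
  have hdiag : ∀ i, RCLike.re ⟪e i, A (e i)⟫_ℂ = ‖C (e i)‖ ^ 2 :=
    fun i => re_inner_self_apply_eq_norm_sqrt_apply_sq hA (e i)
  have htr : trAlong e A = ∑' i, ‖C (e i)‖ ^ 2 := tsum_congr hdiag
  have htr_nonneg : 0 ≤ trAlong e A := htr ▸ tsum_nonneg fun i => sq_nonneg _
  have hnormC : ‖C‖ ≤ √(trAlong e A) := by
    refine C.opNorm_le_bound (Real.sqrt_nonneg _) fun x => ?_
    refine (pow_le_pow_iff_left₀ (norm_nonneg _) (by positivity) two_ne_zero).mp ?_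
    rw [mul_pow, Real.sq_sqrt htr_nonneg, htr, mul_comm]
    exact norm_apply_sq_le_of_isSelfAdjoint e hC (hsum.congr hdiag) x
  calc ‖A‖ = ‖star C * C‖ := by rw [hC.star_eq, CFC.sqrt_mul_sqrt_self A hA]
    _ = ‖C‖ ^ 2 := by rw [CStarRing.norm_star_mul_self, sq]
    _ ≤ trAlong e A := by
        simpa [Real.sq_sqrt htr_nonneg] using pow_le_pow_left₀ (norm_nonneg _) hnormC 2

lemma absOp_eq_abs (T : E →L[ℂ] E) : absOp T = CFC.abs T := rfl

lemma norm_le_trNormAlong {T : E →L[ℂ] E} (hT : IsTraceClass e T) : ‖T‖ ≤ trNormAlong e T := by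
  rw [← CFC.norm_abs]
  exact norm_le_trAlong_of_nonneg e (CFC.abs_nonneg T) hT

lemma summable_re_inner_posPart_of_le {T A : E →L[ℂ] E} (hT : IsSelfAdjoint T) (hA : 0 ≤ A)
    (hTA : T ≤ A) (hsum : Summable fun i => RCLike.re ⟪e i, A (e i)⟫_ℂ) :
    Summable fun i => RCLike.re ⟪e i, T⁺ (e i)⟫_ℂ := by
  set C := CFC.sqrt A
  have hC : IsSelfAdjoint C := .of_nonneg (CFC.sqrt_nonneg A)
  have hdiag : ∀ x, RCLike.re ⟪x, A x⟫_ℂ = ‖C x‖ ^ 2 :=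
    re_inner_self_apply_eq_norm_sqrt_apply_sq hA
  have hsumC : Summable fun i => ‖C (e i)‖ ^ 2 := hsum.congr fun i => hdiag (e i)
  -- As `T⁺ ≤ r A r + ε` with `‖r‖ ≤ 1`, a diagonal sum over `F` is at most `tr A + ε |F|`.
  have hpartial : ∀ F : Finset ι, ∑ i ∈ F, RCLike.re ⟪e i, T⁺ (e i)⟫_ℂ ≤ trAlong e A + 1 := by
    intro F
    set ε : ℝ := ((F.card : ℝ) + 1)⁻¹
    obtain ⟨r, hr, hr_norm, hle⟩ := exists_posPart_le_conj_add hT hTA (ε := ε) (by positivity)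
    have hdiag_le : ∀ i, RCLike.re ⟪e i, T⁺ (e i)⟫_ℂ ≤ ‖C (r (e i))‖ ^ 2 + ε := by
      intro i
      refine (re_inner_apply_self_le_of_le hle (e i)).trans_eq ?_
      rw [← hdiag, add_apply, mul_apply_eq_comp, mul_apply_eq_comp, inner_add_right, map_add,
        ← hr.inner_apply_left]
      simp [Algebra.algebraMap_eq_smul_one, e.orthonormal.1 i]
    have hεF : F.card * ε ≤ 1 := by
      rw [mul_inv_le_iff₀ (by positivity)]
      linarith
    have hr_sq : ‖r‖ ^ 2 ≤ 1 := pow_le_one₀ (norm_nonneg r) hr_norm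
    calc ∑ i ∈ F, RCLike.re ⟪e i, T⁺ (e i)⟫_ℂ ≤ ∑ i ∈ F, (‖C (r (e i))‖ ^ 2 + ε) :=
          Finset.sum_le_sum fun i _ => hdiag_le i
      _ = ∑ i ∈ F, ‖C (r (e i))‖ ^ 2 + F.card * ε := by
          rw [Finset.sum_add_distrib, Finset.sum_const, nsmul_eq_mul]
      _ ≤ ‖r‖ ^ 2 * ∑' j, ‖C (e j)‖ ^ 2 + 1 :=
          add_le_add (sum_norm_apply_apply_sq_le e hC hr hsumC F) hεF
      _ ≤ trAlong e A + 1 := by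
          rw [show trAlong e A = ∑' j, ‖C (e j)‖ ^ 2 from tsum_congr fun i => hdiag (e i)]
          gcongr
          exact mul_le_of_le_one_left (tsum_nonneg fun j => sq_nonneg _) hr_sq
  refine summable_of_sum_le (fun i => ?_) hpartial
  exact ((nonneg_iff_isPositive _).mp (CFC.posPart_nonneg T)).re_inner_nonneg_right (e i)

lemma isTraceClass_iff_of_nonneg {A : E →L[ℂ] E} (hA : 0 ≤ A) :
    IsTraceClass e A ↔ Summable fun i => RCLike.re ⟪e i, A (e i)⟫_ℂ := by
  rw [IsTraceClass, absOp_eq_abs, CFC.abs_of_nonneg A hA]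

lemma IsTraceClass.sub_of_nonneg {A B : E →L[ℂ] E} (hA : 0 ≤ A) (hB : 0 ≤ B)
    (hAtc : IsTraceClass e A) (hBtc : IsTraceClass e B) : IsTraceClass e (A - B) := by
  have hT : IsSelfAdjoint (A - B) := (IsSelfAdjoint.of_nonneg hA).sub (.of_nonneg hB)
  have hpos := summable_re_inner_posPart_of_le e hT hA (sub_le_self A hB)
    ((isTraceClass_iff_of_nonneg e hA).mp hAtc)
  have hneg := summable_re_inner_posPart_of_le e hT.neg hB (by rw [neg_sub]; exact sub_le_self B hA)
    ((isTraceClass_iff_of_nonneg e hB).mp hBtc)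
  rw [CFC.posPart_neg] at hneg
  rw [IsTraceClass, absOp_eq_abs, ← CFC.posPart_add_negPart (A - B) hT]
  simpa only [add_apply, inner_add_right, map_add] using hpos.add hneg

lemma tendsto_of_trNormAlong_sub_tendsto_zero {α : Type*} {l : Filter α} {As : α → E →L[ℂ] E}
    {A : E →L[ℂ] E} (hAs : ∀ k, 0 ≤ As k) (hAstc : ∀ k, IsTraceClass e (As k)) (hA : 0 ≤ A)
    (hAtc : IsTraceClass e A) (hlim : Tendsto (fun k => trNormAlong e (As k - A)) l (𝓝 0)) :
    Tendsto As l (𝓝 A) := by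
  rw [tendsto_iff_norm_sub_tendsto_zero]
  exact squeeze_zero (fun k => norm_nonneg _)
    (fun k => norm_le_trNormAlong e ((hAstc k).sub_of_nonneg e (hAs k) hA hAtc)) hlim

end TraceClass

namespace HilbertTensor

variable {HA HB H : Type*} [NormedAddCommGroup HA] [InnerProductSpace ℂ HA]
  [NormedAddCommGroup HB] [InnerProductSpace ℂ HB]
  [NormedAddCommGroup H] [InnerProductSpace ℂ H] (TP : HilbertTensor HA HB H)

lemma continuousLinearMap_ext {F : Type*} [AddCommGroup F] [Module ℂ F] [TopologicalSpace F]
    [T2Space F] {S T : H →L[ℂ] F} (h : ∀ a b, S (TP.tmul a b) = T (TP.tmul a b)) : S = T :=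
  ContinuousLinearMap.ext_on TP.dense_span (by rintro _ ⟨a, b, rfl⟩; exact h a b)

lemma map_one_adjoint [CompleteSpace HB] [CompleteSpace H] (X : HB →L[ℂ] HB) :
    TP.map 1 (adjoint X) = adjoint (TP.map 1 X) := by
  refine TP.continuousLinearMap_ext fun a b => ext_inner_right ℂ fun v => ?_
  rw [adjoint_inner_left]
  show innerSL ℂ (TP.map 1 (adjoint X) (TP.tmul a b)) v =
    ((innerSL ℂ (TP.tmul a b)).comp (TP.map 1 X)) v
  congr 1
  refine TP.continuousLinearMap_ext fun a' b' => ?_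
  simp [TP.map_tmul, TP.inner_tmul, adjoint_inner_left]

def lTensor [CompleteSpace HB] [CompleteSpace H] : (HB →L[ℂ] HB) →⋆ₐ[ℂ] (H →L[ℂ] H) where
  toFun := TP.map 1
  map_one' := TP.continuousLinearMap_ext fun a b => by simp [TP.map_tmul]
  map_mul' X Y := TP.continuousLinearMap_ext fun a b => by simp [TP.map_tmul, mul_apply_eq_comp]
  map_zero' := TP.continuousLinearMap_ext fun a b => by simp [TP.map_tmul]
  map_add' X Y := TP.continuousLinearMap_ext fun a b => by simp [TP.map_tmul]
  commutes' c := TP.continuousLinearMap_ext fun a b => by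
    simp [TP.map_tmul, Algebra.algebraMap_eq_smul_one]
  map_star' X := by simpa [ContinuousLinearMap.star_eq_adjoint] using TP.map_one_adjoint X

lemma continuous_lTensor [CompleteSpace HB] [CompleteSpace H] : Continuous TP.lTensor :=
  open scoped CStarAlgebra in map_continuous TP.lTensor

end HilbertTensor

section LamCond

variable {HA HB H : Type*} [NormedAddCommGroup HA] [InnerProductSpace ℂ HA]
  [NormedAddCommGroup HB] [InnerProductSpace ℂ HB]
  [NormedAddCommGroup H] [InnerProductSpace ℂ H] [CompleteSpace H]
  (TP : HilbertTensor HA HB H) {ρ : H →L[ℂ] H} {σ : HB →L[ℂ] HB}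

lemma lamCond_le_of_le_smul {l : ℝ} (h : ρ ≤ l • TP.map 1 σ) : LamCond TP ρ σ ≤ l :=
  sInf_le ⟨l, rfl, h⟩

lemma le_smul_of_lamCond_lt {r : ℝ} (hσ : 0 ≤ TP.map 1 σ) (h : LamCond TP ρ σ < r) :
    ρ ≤ r • TP.map 1 σ := by
  obtain ⟨_, ⟨l, rfl, hl⟩, hlr⟩ := sInf_lt_iff.mp h
  exact hl.trans (smul_le_smul_of_nonneg_right (EReal.coe_lt_coe_iff.mp hlr).le hσ)

end LamCond

theorem LamCond_lower_semicontinuous_general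
    {HA HB H : Type*} [NormedAddCommGroup HA] [InnerProductSpace ℂ HA]
    [NormedAddCommGroup HB] [InnerProductSpace ℂ HB] [CompleteSpace HB]
    [NormedAddCommGroup H] [InnerProductSpace ℂ H] [CompleteSpace H]
    (TP : HilbertTensor HA HB H)
    {ι κ : Type*} (e : HilbertBasis ι ℂ H) (f : HilbertBasis κ ℂ HB)
    (t : ℝ) (ρs : ℕ → H →L[ℂ] H) (σs : ℕ → HB →L[ℂ] HB)
    (ρ : H →L[ℂ] H) (σ : HB →L[ℂ] HB)
    (hρspos : ∀ k, (ρs k).IsPositive) (hρstc : ∀ k, IsTraceClass e (ρs k))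
    (hσspos : ∀ k, (σs k).IsPositive) (hσstc : ∀ k, IsTraceClass f (σs k))
    (hρpos : ρ.IsPositive) (hρtc : IsTraceClass e ρ)
    (hσpos : σ.IsPositive) (hσtc : IsTraceClass f σ)
    (hconvρ : Tendsto (fun k => trNormAlong e (ρs k - ρ)) atTop (nhds 0))
    (hconvσ : Tendsto (fun k => trNormAlong f (σs k - σ)) atTop (nhds 0))
    (hlevel : ∀ k, LamCond TP (ρs k) (σs k) ≤ (t : EReal)) :
    LamCond TP ρ σ ≤ (t : EReal) := by
  simp only [← nonneg_iff_isPositive] at hρspos hσspos hρpos hσpos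
  have hρ : Tendsto ρs atTop (𝓝 ρ) :=
    tendsto_of_trNormAlong_sub_tendsto_zero e hρspos hρstc hρpos hρtc hconvρ
  have hσ : Tendsto (fun k => TP.map 1 (σs k)) atTop (𝓝 (TP.map 1 σ)) :=
    (TP.continuous_lTensor.tendsto σ).comp
      (tendsto_of_trNormAlong_sub_tendsto_zero f hσspos hσstc hσpos hσtc hconvσ)
  refine EReal.le_of_forall_lt_iff_le.mp fun r hr => lamCond_le_of_le_smul TP ?_
  have hlevel_r : ∀ k, ρs k ≤ r • TP.map 1 (σs k) := fun k =>
    le_smul_of_lamCond_lt TP (map_nonneg TP.lTensor (hσspos k)) ((hlevel k).trans_lt hr)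
  exact le_of_tendsto_of_tendsto' hρ (hσ.const_smul r) hlevel_r

/-- `Λ(ρ_AB|σ_B)` is lower semicontinuous in the pair `(ρ_AB, σ_B)` w.r.t.
trace-norm convergence: lower level sets are (sequentially) closed. -/
theorem LamCond_lower_semicontinuous
    {HA HB H : Type*} [NormedAddCommGroup HA] [InnerProductSpace ℂ HA]
    [TopologicalSpace.SeparableSpace HA]
    [NormedAddCommGroup HB] [InnerProductSpace ℂ HB] [CompleteSpace HB]
    [TopologicalSpace.SeparableSpace HB]
    [NormedAddCommGroup H] [InnerProductSpace ℂ H] [CompleteSpace H]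
    [TopologicalSpace.SeparableSpace H]
    (TP : HilbertTensor HA HB H)
    {ι κ : Type*} (e : HilbertBasis ι ℂ H) (f : HilbertBasis κ ℂ HB)
    (t : ℝ) (ρs : ℕ → H →L[ℂ] H) (σs : ℕ → HB →L[ℂ] HB)
    (ρ : H →L[ℂ] H) (σ : HB →L[ℂ] HB)
    (hρspos : ∀ k, (ρs k).IsPositive) (hρstc : ∀ k, IsTraceClass e (ρs k))
    (hσspos : ∀ k, (σs k).IsPositive) (hσstc : ∀ k, IsTraceClass f (σs k))
    (hρpos : ρ.IsPositive) (hρtc : IsTraceClass e ρ)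
    (hσpos : σ.IsPositive) (hσtc : IsTraceClass f σ)
    (hconvρ : Tendsto (fun k => trNormAlong e (ρs k - ρ)) atTop (nhds 0))
    (hconvσ : Tendsto (fun k => trNormAlong f (σs k - σ)) atTop (nhds 0))
    (hlevel : ∀ k, LamCond TP (ρs k) (σs k) ≤ (t : EReal)) :
    LamCond TP ρ σ ≤ (t : EReal) :=
  LamCond_lower_semicontinuous_general TP e f t ρs σs ρ σ hρspos hρstc hσspos hσstc hρpos hρtc hσpos
    hσtc hconvρ hconvσ hlevel
end

section
/- Let ρ_AB = |ψ⟩⟨ψ| be a pure state on H_A ⊗ H_B with reduced state ρ_A = tr_B ρ_AB, and suppose √ρ_A is trace class. Then the operator σ̃_B := tr(√ρ_A)·√ρ_B (with ρ_B = tr_A ρ_AB) satisfies id_A ⊗ σ̃_B ≥ ρ_AB. -/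
open scoped InnerProductSpace ComplexOrder
open ContinuousLinearMap Filter Topology

set_option synthInstance.maxHeartbeats 1000000
set_option maxHeartbeats 1600000

/-! Write `ψ = ∑ r_k e_k` with `e_k = a_k ⊗ b_k`. Cauchy–Schwarz with the weights `r_k` gives
`|ψ⟩⟨ψ| ≤ (∑ r_k) ∑ r_k |e_k⟩⟨e_k|`. Each `|e_k⟩⟨e_k|` lies below the projection
`id ⊗ |b_k⟩⟨b_k|`, since both are projections and the latter fixes `e_k`; summing, the bound is
`id ⊗ (∑ r_k) ∑ r_k |b_k⟩⟨b_k| = id ⊗ tr(√ρ_A) √ρ_B`. -/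

open InnerProductSpace

noncomputable section

section RankOne

variable {E : Type*} [NormedAddCommGroup E] [InnerProductSpace ℂ E]

lemma re_inner_rankOne_self_apply (v x : E) :
    RCLike.re ⟪rankOne ℂ v v x, x⟫_ℂ = ‖⟪v, x⟫_ℂ‖ ^ 2 := by
  rw [rankOne_apply, inner_smul_left, RCLike.conj_mul]
  norm_cast

variable [CompleteSpace E]

/-- On the quadratic form at `x` this is Cauchy–Schwarz:
`|⟪∑ r_k e_k, x⟫|² ≤ (∑ r_k) ∑ r_k |⟪e_k, x⟫|²`. -/
lemma rankOne_sum_self_le {ι : Type*} (s : Finset ι) {r : ι → ℝ} (hr : ∀ k, 0 ≤ r k)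
    (e : ι → E) :
    rankOne ℂ (∑ k ∈ s, r k • e k) (∑ k ∈ s, r k • e k) ≤
      (∑ k ∈ s, r k) • ∑ k ∈ s, r k • rankOne ℂ (e k) (e k) := by
  set v := ∑ k ∈ s, r k • e k
  have hsa (w : E) : IsSelfAdjoint (rankOne ℂ w w) := (isPositive_rankOne_self w).isSelfAdjoint
  rw [ContinuousLinearMap.le_def, isPositive_def']
  refine ⟨((IsSelfAdjoint.all _).smul
    (isSelfAdjoint_sum s fun k _ => (IsSelfAdjoint.all (r k)).smul (hsa (e k)))).sub (hsa v),
    fun x => ?_⟩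
  set t : ι → ℝ := fun k => ‖⟪e k, x⟫_ℂ‖
  have htri : ‖⟪v, x⟫_ℂ‖ ≤ ∑ k ∈ s, r k * t k := by
    rw [sum_inner]
    refine (norm_sum_le _ _).trans (Finset.sum_le_sum fun k _ => ?_)
    simp [t, ← Complex.coe_smul, inner_smul_left, abs_of_nonneg (hr k)]
  have hcs : (∑ k ∈ s, r k * t k) ^ 2 ≤ (∑ k ∈ s, r k) * ∑ k ∈ s, r k * t k ^ 2 :=
    Finset.sum_sq_le_sum_mul_sum_of_sq_le_mul s (fun k _ => hr k)
      (fun k _ => mul_nonneg (hr k) (sq_nonneg _)) fun k _ => le_of_eq (by ring)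
  have hform : reApplyInnerSelf ((∑ k ∈ s, r k) • ∑ k ∈ s, r k • rankOne ℂ (e k) (e k) -
      rankOne ℂ v v) x = (∑ k ∈ s, r k) * ∑ k ∈ s, r k * t k ^ 2 - ‖⟪v, x⟫_ℂ‖ ^ 2 := by
    simp only [reApplyInnerSelf_apply, sub_apply, inner_sub_left, map_sub, smul_apply, sum_apply,
      inner_smul_left_eq_smul, sum_inner, RCLike.smul_re, map_sum, re_inner_rankOne_self_apply, t]
  rw [hform, sub_nonneg]
  calc ‖⟪v, x⟫_ℂ‖ ^ 2 ≤ (∑ k ∈ s, r k * t k) ^ 2 := pow_le_pow_left₀ (norm_nonneg _) htri 2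
    _ ≤ _ := hcs

lemma rankOne_hasSum_self_le {ι : Type*} {r : ι → ℝ} (hr : ∀ k, 0 ≤ r k) {e : ι → E} {ψ : E}
    {c : ℝ} {D : E →L[ℂ] E} (hψ : HasSum (fun k => r k • e k) ψ) (hc : HasSum r c)
    (hD : HasSum (fun k => r k • rankOne ℂ (e k) (e k)) D) :
    rankOne ℂ ψ ψ ≤ c • D := by
  have hcont : Continuous fun v : E => rankOne ℂ v v := by simp only [rankOne_def]; fun_prop
  exact le_of_tendsto_of_tendsto' ((hcont.tendsto ψ).comp hψ) (Tendsto.smul hc hD)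
    fun s => rankOne_sum_self_le s hr e

end RankOne

lemma dyad_eq_rankOne {H : Type*} [NormedAddCommGroup H] [InnerProductSpace ℂ H] (x y : H) :
    dyad x y = rankOne ℂ x y := rfl

lemma summable_smul_of_norm_le {ι E : Type*} [NormedAddCommGroup E] [NormedSpace ℝ E]
    [CompleteSpace E] {r : ι → ℝ} {f : ι → E} {C : ℝ} (hr : Summable r) (hr0 : ∀ k, 0 ≤ r k)
    (hf : ∀ k, ‖f k‖ ≤ C) : Summable fun k => r k • f k :=
  (hr.mul_right C).of_norm_bounded fun k => by
    rw [norm_smul, Real.norm_of_nonneg (hr0 k)]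
    exact mul_le_mul_of_nonneg_left (hf k) (hr0 k)

namespace HilbertTensor

variable {HA HB H : Type*} [NormedAddCommGroup HA] [InnerProductSpace ℂ HA]
  [NormedAddCommGroup HB] [InnerProductSpace ℂ HB]
  [NormedAddCommGroup H] [InnerProductSpace ℂ H] (TP : HilbertTensor HA HB H)

lemma norm_tmul (x : HA) (y : HB) : ‖TP.tmul x y‖ = ‖x‖ * ‖y‖ := by
  have h := TP.inner_tmul x x y y
  simp only [inner_self_eq_norm_sq_to_K] at h
  exact (pow_left_inj₀ (norm_nonneg _) (by positivity) two_ne_zero).mp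
    (by rw [mul_pow]; exact_mod_cast h)

def tmulL (x : HA) : HB →L[ℂ] H :=
  (TP.tmul x).mkContinuous ‖x‖ fun y => (TP.norm_tmul x y).le

@[simp]
lemma tmulL_apply (x : HA) (y : HB) : TP.tmulL x y = TP.tmul x y := rfl

/-- `TP.map` comes with no linearity or continuity, so identities involving it are checked on
elementary tensors and extended by density. -/
lemma ext {F : Type*} [TopologicalSpace F] [AddCommMonoid F] [Module ℂ F] [T2Space F]
    {S T : H →L[ℂ] F} (h : ∀ x y, S (TP.tmul x y) = T (TP.tmul x y)) : S = T :=
  ContinuousLinearMap.ext_on TP.dense_span (by rintro _ ⟨x, y, rfl⟩; exact h x y)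

lemma map_mul (S S' : HA →L[ℂ] HA) (T T' : HB →L[ℂ] HB) :
    TP.map (S * S') (T * T') = TP.map S T * TP.map S' T' :=
  TP.ext fun x y => by simp [TP.map_tmul]

lemma map_smul (S : HA →L[ℂ] HA) (c : ℝ) (T : HB →L[ℂ] HB) :
    TP.map S (c • T) = c • TP.map S T :=
  TP.ext fun x y => by simp [TP.map_tmul, ← Complex.coe_smul]

lemma hasSum_map {ι : Type*} (S : HA →L[ℂ] HA) {T : ι → HB →L[ℂ] HB} {σ : HB →L[ℂ] HB}
    (hT : HasSum T σ) (hST : Summable fun k => TP.map S (T k)) :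
    HasSum (fun k => TP.map S (T k)) (TP.map S σ) := by
  convert hST.hasSum using 1
  refine TP.ext fun x y => ?_
  have h1 := (hT.mapL (apply ℂ HB y)).mapL (TP.tmulL (S x))
  have h2 := hST.hasSum.mapL (apply ℂ H (TP.tmul x y))
  simp only [apply_apply, tmulL_apply, TP.map_tmul] at h1 h2
  rw [TP.map_tmul]
  exact h1.unique h2

lemma isSymmetric_map {S : HA →L[ℂ] HA} {T : HB →L[ℂ] HB}
    (hS : (S : HA →ₗ[ℂ] HA).IsSymmetric) (hT : (T : HB →ₗ[ℂ] HB).IsSymmetric) :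
    (TP.map S T : H →ₗ[ℂ] H).IsSymmetric := by
  have on_tmul (x : HA) (y : HB) (x' : HA) (y' : HB) :
      ⟪TP.map S T (TP.tmul x y), TP.tmul x' y'⟫_ℂ =
        ⟪TP.tmul x y, TP.map S T (TP.tmul x' y')⟫_ℂ := by
    rw [TP.map_tmul, TP.map_tmul, TP.inner_tmul, TP.inner_tmul]
    exact congr_arg₂ _ (hS x x') (hT y y')
  have on_tmul_left (x : HA) (y : HB) (v : H) :
      ⟪TP.map S T (TP.tmul x y), v⟫_ℂ = ⟪TP.tmul x y, TP.map S T v⟫_ℂ :=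
    congr($(TP.ext (S := innerSL ℂ (TP.map S T (TP.tmul x y)))
      (T := (innerSL ℂ (TP.tmul x y)).comp (TP.map S T)) fun x' y' => by
        simpa using on_tmul x y x' y') v)
  intro u v
  have h := TP.ext (S := innerSL ℂ (TP.map S T v)) (T := (innerSL ℂ v).comp (TP.map S T))
    fun x y => by
      simp only [innerSL_apply_apply, comp_apply]
      rw [← inner_conj_symm, ← on_tmul_left, inner_conj_symm]
  have hu : ⟪TP.map S T v, u⟫_ℂ = ⟪v, TP.map S T u⟫_ℂ := by simpa using congr($h u)
  simp only [coe_coe]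
  rw [← inner_conj_symm, ← hu, inner_conj_symm]

variable [CompleteSpace HB] [CompleteSpace H]

lemma isStarProjection_map_one {p : HB →L[ℂ] HB} (hp : IsStarProjection p) :
    IsStarProjection (TP.map 1 p) where
  isIdempotentElem := by
    rw [IsIdempotentElem, ← TP.map_mul, one_mul, hp.isIdempotentElem.eq]
  isSelfAdjoint := isSelfAdjoint_iff_isSymmetric.mpr <|
    TP.isSymmetric_map (by simp) (isSelfAdjoint_iff_isSymmetric.mp hp.isSelfAdjoint)

lemma rankOne_tmul_le_map_one_rankOne {x : HA} {y : HB} (hx : ‖x‖ = 1) (hy : ‖y‖ = 1) :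
    rankOne ℂ (TP.tmul x y) (TP.tmul x y) ≤ TP.map 1 (rankOne ℂ y y) := by
  have hxy : ‖TP.tmul x y‖ = 1 := by rw [TP.norm_tmul, hx, hy, one_mul]
  refine (isStarProjection_rankOne_self hxy).le_of_mul_eq_right
    (TP.isStarProjection_map_one (isStarProjection_rankOne_self hy)) ?_
  rw [mul_def, comp_rankOne, TP.map_tmul, one_apply_eq_self, rankOne_apply,
    inner_self_eq_norm_sq_to_K, hy]
  simp

end HilbertTensor

theorem pure_state_sqrt_witness_general
    {HA HB H : Type*} [NormedAddCommGroup HA] [InnerProductSpace ℂ HA]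
    [NormedAddCommGroup HB] [InnerProductSpace ℂ HB] [CompleteSpace HB]
    [NormedAddCommGroup H] [InnerProductSpace ℂ H] [CompleteSpace H]
    (TP : HilbertTensor HA HB H)
    (a : ℕ → HA) (b : ℕ → HB) (r : ℕ → ℝ)
    (ha : Orthonormal ℂ a) (hb : Orthonormal ℂ b)
    (hr : ∀ k, 0 ≤ r k)
    (ψ : H) (hψ : ψ = ∑' k, (r k : ℂ) • TP.tmul (a k) (b k))
    (hsum : Summable r) :
    dyad ψ ψ ≤ TP.map 1 ((∑' k, r k) • ∑' k, r k • dyad (b k) (b k)) := by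
  set e : ℕ → H := fun k => TP.tmul (a k) (b k)
  set P : ℕ → H →L[ℂ] H := fun k => TP.map 1 (rankOne ℂ (b k) (b k))
  have he (k : ℕ) : ‖e k‖ = 1 := by rw [TP.norm_tmul, ha.1 k, hb.1 k, one_mul]
  have hP (k : ℕ) : IsStarProjection (P k) :=
    TP.isStarProjection_map_one (isStarProjection_rankOne_self (hb.1 k))
  have hψe : HasSum (fun k => r k • e k) ψ := by
    simp only [hψ, Complex.coe_smul]
    exact (summable_smul_of_norm_le hsum hr fun k => (he k).le).hasSum
  have hsum_b : Summable fun k => r k • rankOne ℂ (b k) (b k) :=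
    summable_smul_of_norm_le (C := 1) hsum hr fun k => by simp [hb.1 k]
  have hsum_e : Summable fun k => r k • rankOne ℂ (e k) (e k) :=
    summable_smul_of_norm_le (C := 1) hsum hr fun k => by simp [he k]
  have hsum_P : Summable fun k => r k • P k :=
    summable_smul_of_norm_le hsum hr fun k => (hP k).norm_le
  calc dyad ψ ψ ≤ (∑' k, r k) • ∑' k, r k • rankOne ℂ (e k) (e k) :=
        rankOne_hasSum_self_le hr hψe hsum.hasSum hsum_e.hasSum
    _ ≤ (∑' k, r k) • ∑' k, r k • P k :=
        smul_le_smul_of_nonneg_left (hsum_e.tsum_le_tsum (fun k => smul_le_smul_of_nonneg_left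
          (TP.rankOne_tmul_le_map_one_rankOne (ha.1 k) (hb.1 k)) (hr k)) hsum_P) (tsum_nonneg hr)
    _ = TP.map 1 ((∑' k, r k) • ∑' k, r k • dyad (b k) (b k)) := by
        simp only [dyad_eq_rankOne, TP.map_smul]
        rw [← (TP.hasSum_map 1 hsum_b.hasSum (by simpa only [TP.map_smul] using hsum_P)).tsum_eq]
        simp only [TP.map_smul, P]

/-- For a pure state with Schmidt decomposition `ψ = Σ r_k a_k ⊗ b_k` with
`Σ r_k < ∞` (`√ρ_A` trace class), the operator `σ̃_B = (tr √ρ_A)·√ρ_B` satisfies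
`id_A ⊗ σ̃_B ≥ |ψ⟩⟨ψ|`. -/
theorem pure_state_sqrt_witness
    {HA HB H : Type*} [NormedAddCommGroup HA] [InnerProductSpace ℂ HA]
    [TopologicalSpace.SeparableSpace HA]
    [NormedAddCommGroup HB] [InnerProductSpace ℂ HB] [CompleteSpace HB]
    [TopologicalSpace.SeparableSpace HB]
    [NormedAddCommGroup H] [InnerProductSpace ℂ H] [CompleteSpace H]
    (TP : HilbertTensor HA HB H)
    (a : ℕ → HA) (b : ℕ → HB) (r : ℕ → ℝ)
    (ha : Orthonormal ℂ a) (hb : Orthonormal ℂ b)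
    (hr : ∀ k, 0 ≤ r k) (hsq : Summable fun k => (r k) ^ 2)
    (hnorm : ∑' k, (r k) ^ 2 = 1)
    (ψ : H) (hψ : ψ = ∑' k, (r k : ℂ) • TP.tmul (a k) (b k))
    (hsum : Summable r) :
    dyad ψ ψ ≤ TP.map 1 ((∑' k, r k) • ∑' k, r k • dyad (b k) (b k)) :=
  pure_state_sqrt_witness_general TP a b r ha hb hr ψ hψ hsum

end
end

section
/- Let ρ_AB = |ψ⟩⟨ψ| be a pure state on H_A ⊗ H_B such that √ρ_A is not trace class (i.e., the sum of the Schmidt coefficients of ψ diverges). Then there is no positive trace-class operator σ̃_B on H_B with id_A ⊗ σ̃_B ≥ ρ_AB; equivalently H_min(ρ_AB|B) = −∞. -/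
/-!
Test `id_A ⊗ σ ≥ |ψ⟩⟨ψ|` on the vectors `φ_F = ∑_{k ∈ F} a_k ⊗ b_k`, `F` finite: since
`⟪φ_F, ψ⟫ = ∑_{k ∈ F} r_k` and `⟪φ_F, (id_A ⊗ σ) φ_F⟫ = ∑_{k ∈ F} ⟪b_k, σ b_k⟫ ≤ tr σ`, the partial
sums of the Schmidt coefficients are bounded by `√(tr σ)`, so they would be summable. The bound by
the trace holds along any orthonormal family because `∑_k ⟪b_k, σ b_k⟫ = ∑_k ‖√σ b_k‖²` is a
partial Hilbert–Schmidt sum of `√σ`, dominated by `∑_i ‖√σ f_i‖² = tr σ` via Parseval and Bessel.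
-/

open scoped InnerProductSpace ComplexOrder
open ContinuousLinearMap Filter Topology

set_option synthInstance.maxHeartbeats 1000000
set_option maxHeartbeats 1600000

section InnerProduct

variable {𝕜 E : Type*} [RCLike 𝕜] [NormedAddCommGroup E] [InnerProductSpace 𝕜 E]

theorem HilbertBasis.hasSum_norm_sq_inner {ι : Type*} (f : HilbertBasis ι 𝕜 E) (x : E) :
    HasSum (fun i => ‖⟪f i, x⟫_𝕜‖ ^ 2) (‖x‖ ^ 2) := by
  have h := RCLike.hasSum_re 𝕜 (f.hasSum_inner_mul_inner x x)
  rw [inner_self_eq_norm_sq] at h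
  convert h using 2 with i
  rw [← inner_conj_symm (f i) x, RCLike.mul_conj, RCLike.norm_conj, ← RCLike.ofReal_pow,
    RCLike.ofReal_re]

theorem Orthonormal.inner_tsum_smul [CompleteSpace E] {ι : Type*} {e : ι → E}
    (he : Orthonormal 𝕜 e) {c : ι → 𝕜} (hc : Summable fun k => ‖c k‖ ^ 2) (j : ι) :
    ⟪e j, ∑' k, c k • e k⟫_𝕜 = c j := by
  have hsum : Summable fun k => c k • e k := by
    simpa using (he.orthogonalFamily.summable_iff_norm_sq_summable c).2 hc
  have h := hsum.hasSum.mapL (innerSL 𝕜 (e j))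
  simp only [innerSL_apply_apply] at h
  rw [← h.tsum_eq, tsum_eq_single j]
  · simp [inner_smul_right, he.1 j]
  · intro k hk
    simp [inner_smul_right, he.2 hk.symm]

theorem re_inner_apply_le_of_le {S T : E →L[𝕜] E} (hST : S ≤ T) (x : E) :
    RCLike.re ⟪x, S x⟫_𝕜 ≤ RCLike.re ⟪x, T x⟫_𝕜 := by
  simpa [inner_sub_right] using ((le_def S T).1 hST).re_inner_nonneg_right x

end InnerProduct

theorem HilbertBasis.sum_norm_sq_apply_le_tsum_norm_sq_adjoint_apply
    {𝕜 E F ι ι' : Type*} [RCLike 𝕜] [NormedAddCommGroup E] [InnerProductSpace 𝕜 E]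
    [CompleteSpace E] [NormedAddCommGroup F] [InnerProductSpace 𝕜 F] [CompleteSpace F]
    (f : HilbertBasis ι 𝕜 F) (T : E →L[𝕜] F) (hT : Summable fun i => ‖adjoint T (f i)‖ ^ 2)
    {v : ι' → E} (hv : Orthonormal 𝕜 v) (s : Finset ι') :
    ∑ k ∈ s, ‖T (v k)‖ ^ 2 ≤ ∑' i, ‖adjoint T (f i)‖ ^ 2 := by
  refine hasSum_le (fun i => ?_) (hasSum_sum fun k _ => f.hasSum_norm_sq_inner (T (v k)))
    hT.hasSum
  calc ∑ k ∈ s, ‖⟪f i, T (v k)⟫_𝕜‖ ^ 2 = ∑ k ∈ s, ‖⟪v k, adjoint T (f i)⟫_𝕜‖ ^ 2 := by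
        simp_rw [← adjoint_inner_left T (v _) (f i), norm_inner_symm]
    _ ≤ ‖adjoint T (f i)‖ ^ 2 := hv.sum_inner_products_le _

section Positive

variable {E : Type*} [NormedAddCommGroup E] [InnerProductSpace ℂ E] [CompleteSpace E]
  {σ : E →L[ℂ] E}

theorem re_inner_apply_self_eq_norm_sq_sqrt (hσ : 0 ≤ σ) (x : E) :
    RCLike.re ⟪x, σ x⟫_ℂ = ‖CFC.sqrt σ x‖ ^ 2 := by
  rw [apply_norm_sq_eq_inner_adjoint_right, (CFC.sqrt_nonneg σ).isSelfAdjoint.adjoint_eq,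
    ← mul_def, CFC.sqrt_mul_sqrt_self σ hσ]

theorem absOp_of_nonneg (hσ : 0 ≤ σ) : absOp σ = σ := by
  rw [absOp, hσ.isSelfAdjoint.adjoint_eq, CFC.sqrt_mul_self σ hσ]

theorem sum_re_inner_le_trAlong {κ ι : Type*} (f : HilbertBasis κ ℂ E) (hσ : 0 ≤ σ)
    (htc : IsTraceClass f σ) {v : ι → E} (hv : Orthonormal ℂ v) (s : Finset ι) :
    ∑ k ∈ s, RCLike.re ⟪v k, σ (v k)⟫_ℂ ≤ trAlong f σ := by
  have hsqrt : adjoint (CFC.sqrt σ) = CFC.sqrt σ := (CFC.sqrt_nonneg σ).isSelfAdjoint.adjoint_eq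
  rw [IsTraceClass, absOp_of_nonneg hσ] at htc
  simp only [trAlong, re_inner_apply_self_eq_norm_sq_sqrt hσ] at htc ⊢
  simpa only [hsqrt] using
    f.sum_norm_sq_apply_le_tsum_norm_sq_adjoint_apply (CFC.sqrt σ) (by rwa [hsqrt]) hv s

end Positive

theorem re_inner_dyad_self {H : Type*} [NormedAddCommGroup H] [InnerProductSpace ℂ H]
    (ψ x : H) : RCLike.re ⟪x, dyad ψ ψ x⟫_ℂ = ‖⟪x, ψ⟫_ℂ‖ ^ 2 := by
  rw [dyad, smulRight_apply, innerSL_apply_apply, inner_smul_right, ← inner_conj_symm,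
    RCLike.conj_mul, ← RCLike.ofReal_pow, RCLike.ofReal_re]

namespace HilbertTensor

variable {HA HB H : Type*} [NormedAddCommGroup HA] [InnerProductSpace ℂ HA]
  [NormedAddCommGroup HB] [InnerProductSpace ℂ HB] [NormedAddCommGroup H] [InnerProductSpace ℂ H]
  (TP : HilbertTensor HA HB H) {ι : Type*} {a : ι → HA}

theorem orthonormal_tmul (ha : Orthonormal ℂ a) {b : ι → HB} (hb : Orthonormal ℂ b) :
    Orthonormal ℂ fun k => TP.tmul (a k) (b k) := by
  classical
  rw [orthonormal_iff_ite] at ha hb ⊢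
  intro j k
  rw [TP.inner_tmul, ha, hb]
  split_ifs <;> simp

theorem inner_sum_tmul_map_one_apply (ha : Orthonormal ℂ a) (b : ι → HB) (σ : HB →L[ℂ] HB)
    (s : Finset ι) :
    ⟪∑ k ∈ s, TP.tmul (a k) (b k), TP.map 1 σ (∑ k ∈ s, TP.tmul (a k) (b k))⟫_ℂ =
      ∑ k ∈ s, ⟪b k, σ (b k)⟫_ℂ := by
  classical
  simp only [map_sum, TP.map_tmul, one_apply_eq_self, sum_inner, inner_sum, TP.inner_tmul,
    orthonormal_iff_ite.mp ha, ite_mul, one_mul, zero_mul, Finset.sum_ite_eq']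
  exact Finset.sum_congr rfl fun k hk => if_pos hk

end HilbertTensor

theorem pure_state_min_entropy_bot_general
    {HA HB H : Type*} [NormedAddCommGroup HA] [InnerProductSpace ℂ HA]
    [NormedAddCommGroup HB] [InnerProductSpace ℂ HB] [CompleteSpace HB]
    [NormedAddCommGroup H] [InnerProductSpace ℂ H] [CompleteSpace H]
    (TP : HilbertTensor HA HB H)
    (a : ℕ → HA) (b : ℕ → HB) (r : ℕ → ℝ)
    (ha : Orthonormal ℂ a) (hb : Orthonormal ℂ b)
    (hr : ∀ k, 0 ≤ r k) (hsq : Summable fun k => (r k) ^ 2)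
    (ψ : H) (hψ : ψ = ∑' k, (r k : ℂ) • TP.tmul (a k) (b k))
    (hnsum : ¬ Summable r) {κ : Type*} (f : HilbertBasis κ ℂ HB) :
    ¬ ∃ σ : HB →L[ℂ] HB, σ.IsPositive ∧ IsTraceClass f σ ∧
        dyad ψ ψ ≤ TP.map 1 σ := by
  rintro ⟨σ, hσ, htc, hle⟩
  have he := TP.orthonormal_tmul ha hb
  have hcoeff : ∀ k, ⟪TP.tmul (a k) (b k), ψ⟫_ℂ = r k := fun k => by
    rw [hψ, he.inner_tsum_smul (by simpa using hsq)]
  refine hnsum (summable_of_sum_le (c := √(trAlong f σ)) hr fun s => Real.le_sqrt_of_sq_le ?_)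
  set φ := ∑ k ∈ s, TP.tmul (a k) (b k)
  calc (∑ k ∈ s, r k) ^ 2 = RCLike.re ⟪φ, dyad ψ ψ φ⟫_ℂ := by
        rw [re_inner_dyad_self, sum_inner]
        simp [hcoeff, ← Complex.ofReal_sum, abs_of_nonneg (Finset.sum_nonneg fun k _ => hr k)]
    _ ≤ RCLike.re ⟪φ, TP.map 1 σ φ⟫_ℂ := re_inner_apply_le_of_le hle φ
    _ = ∑ k ∈ s, RCLike.re ⟪b k, σ (b k)⟫_ℂ := by
        rw [TP.inner_sum_tmul_map_one_apply ha, map_sum]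
    _ ≤ trAlong f σ := sum_re_inner_le_trAlong f ((nonneg_iff_isPositive σ).2 hσ) htc hb s

/-- For a pure state whose Schmidt coefficients are not summable
(`√ρ_A` not trace class), no positive trace-class `σ̃_B` satisfies
`id_A ⊗ σ̃_B ≥ |ψ⟩⟨ψ|`; i.e. `H_min(ρ_AB|B) = -∞`. -/
theorem pure_state_min_entropy_bot
    {HA HB H : Type*} [NormedAddCommGroup HA] [InnerProductSpace ℂ HA]
    [TopologicalSpace.SeparableSpace HA]
    [NormedAddCommGroup HB] [InnerProductSpace ℂ HB] [CompleteSpace HB]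
    [TopologicalSpace.SeparableSpace HB]
    [NormedAddCommGroup H] [InnerProductSpace ℂ H] [CompleteSpace H]
    (TP : HilbertTensor HA HB H)
    (a : ℕ → HA) (b : ℕ → HB) (r : ℕ → ℝ)
    (ha : Orthonormal ℂ a) (hb : Orthonormal ℂ b)
    (hr : ∀ k, 0 ≤ r k) (hsq : Summable fun k => (r k) ^ 2)
    (hnorm : ∑' k, (r k) ^ 2 = 1)
    (ψ : H) (hψ : ψ = ∑' k, (r k : ℂ) • TP.tmul (a k) (b k))
    (hnsum : ¬ Summable r) {κ : Type*} (f : HilbertBasis κ ℂ HB) :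
    ¬ ∃ σ : HB →L[ℂ] HB, σ.IsPositive ∧ IsTraceClass f σ ∧
        dyad ψ ψ ≤ TP.map 1 σ :=
  pure_state_min_entropy_bot_general TP a b r ha hb hr hsq ψ hψ hnsum f
end

section
/- Monotonicity of Λ(·|B) under projection: with notation as above, if σ̃_B is a positive trace-class operator with P_k^A ⊗ σ̃_B ≥ ρ_AB^k, then for k' ≤ k, P_{k'}^A ⊗ (P_{k'}^B σ̃_B P_{k'}^B) ≥ ρ_AB^{k'}; consequently Λ(ρ_AB^{k'}|B) ≤ Λ(ρ_AB^k|B) ≤ Λ(ρ_AB|B), where Λ(ρ|B) = inf{tr σ̃_B : σ̃_B ≥ 0 trace class, id_A ⊗ σ̃_B ≥ ρ} (restricted identity allowed by supp ρ_AB^k). -/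
open scoped InnerProductSpace ComplexOrder
open ContinuousLinearMap Filter Topology

set_option synthInstance.maxHeartbeats 1000000
set_option maxHeartbeats 1600000

/-! Conjugation by the projection `C = P^A ⊗ P^B` preserves operator inequalities, and
`C (id ⊗ σ̃) C = P^A ⊗ P^B σ̃ P^B ≤ id ⊗ P^B σ̃ P^B`; so every `σ̃` feasible for `ρ` gives the
feasible `P^B σ̃ P^B` for `C ρ C`. Its trace is not larger: writing `σ̃ = R†R`, one has
`tr (P σ̃ P) = ‖R P‖²_HS = ‖P R†‖²_HS ≤ ‖R†‖²_HS = tr σ̃`, as a Hilbert–Schmidt norm is invariant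
under taking adjoints. Finally `P_{k'} P_k = P_{k'}` makes `ρ^{k'}` the conjugate of `ρ^k` by
`P_{k'}^A ⊗ P_{k'}^B`. -/

open scoped ENNReal NNReal

section HilbertSchmidt

variable {𝕜 E F : Type*} [RCLike 𝕜] [NormedAddCommGroup E] [InnerProductSpace 𝕜 E]
  [NormedAddCommGroup F] [InnerProductSpace 𝕜 F]

theorem HilbertBasis.tsum_enorm_inner_sq {ι : Type*} (b : HilbertBasis ι 𝕜 E) (x : E) :
    ∑' i, ‖⟪b i, x⟫_𝕜‖ₑ ^ 2 = ‖x‖ₑ ^ 2 := by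
  have hsum : HasSum (fun i => ‖⟪b i, x⟫_𝕜‖ ^ 2) (‖x‖ ^ 2) := by
    have h := RCLike.hasSum_re 𝕜 (b.hasSum_inner_mul_inner x x)
    rw [inner_self_eq_norm_sq] at h
    refine h.congr_fun fun i => ?_
    rw [← inner_conj_symm (b i) x, RCLike.mul_conj, RCLike.norm_conj]
    norm_cast
  simp_rw [← ofReal_norm, ← ENNReal.ofReal_pow (norm_nonneg _)]
  rw [← ENNReal.ofReal_tsum_of_nonneg (fun _ => by positivity) hsum.summable, hsum.tsum_eq]

theorem HilbertBasis.tsum_enorm_adjoint_apply_sq [CompleteSpace E] [CompleteSpace F]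
    {ι κ : Type*} (b : HilbertBasis ι 𝕜 E) (c : HilbertBasis κ 𝕜 F) (T : E →L[𝕜] F) :
    ∑' j, ‖adjoint T (c j)‖ₑ ^ 2 = ∑' i, ‖T (b i)‖ₑ ^ 2 := calc
  ∑' j, ‖adjoint T (c j)‖ₑ ^ 2 = ∑' j, ∑' i, ‖⟪b i, adjoint T (c j)⟫_𝕜‖ₑ ^ 2 := by
    simp_rw [b.tsum_enorm_inner_sq]
  _ = ∑' i, ∑' j, ‖⟪c j, T (b i)⟫_𝕜‖ₑ ^ 2 := by
    rw [ENNReal.tsum_comm]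
    simp_rw [adjoint_inner_right, ← ofReal_norm, norm_inner_symm]
  _ = ∑' i, ‖T (b i)‖ₑ ^ 2 := by simp_rw [c.tsum_enorm_inner_sq]

end HilbertSchmidt

theorem summable_and_tsum_sq_norm_le_of_tsum_enorm_sq_le {ι E F : Type*}
    [SeminormedAddCommGroup E] [SeminormedAddCommGroup F] {u : ι → E} {v : ι → F}
    (hv : Summable fun i => ‖v i‖ ^ 2) {c : ℝ≥0}
    (h : ∑' i, ‖u i‖ₑ ^ 2 ≤ c * ∑' i, ‖v i‖ₑ ^ 2) :
    (Summable fun i => ‖u i‖ ^ 2) ∧ ∑' i, ‖u i‖ ^ 2 ≤ c * ∑' i, ‖v i‖ ^ 2 := by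
  simp_rw [← ofReal_norm, ← ENNReal.ofReal_pow (norm_nonneg _)] at h
  rw [← ENNReal.ofReal_tsum_of_nonneg (fun _ => by positivity) hv, ← ENNReal.ofReal_coe_nnreal,
    ← ENNReal.ofReal_mul c.coe_nonneg] at h
  have hu : Summable fun i => ‖u i‖ ^ 2 :=
    (ENNReal.summable_toReal (ne_top_of_le_ne_top ENNReal.ofReal_ne_top h)).congr
      fun i => ENNReal.toReal_ofReal (by positivity)
  rw [← ENNReal.ofReal_tsum_of_nonneg (fun _ => by positivity) hu] at h
  exact ⟨hu, (ENNReal.ofReal_le_ofReal_iff (by positivity)).mp h⟩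

section TraceClass

variable {E : Type*} [NormedAddCommGroup E] [InnerProductSpace ℂ E] [CompleteSpace E]

theorem absOp_of_isPositive {T : E →L[ℂ] E} (hT : T.IsPositive) : absOp T = T := by
  rw [absOp, ← star_eq_adjoint, hT.isSelfAdjoint.star_eq]
  exact CFC.sqrt_mul_self T ((nonneg_iff_isPositive T).mpr hT)

theorem IsTraceClass.conj_adjoint_and_trAlong_le {ι : Type*} {f : HilbertBasis ι ℂ E}
    {τ : E →L[ℂ] E} (hτ : τ.IsPositive) (htc : IsTraceClass f τ) (S : E →L[ℂ] E) :
    IsTraceClass f (S ∘L τ ∘L adjoint S) ∧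
      trAlong f (S ∘L τ ∘L adjoint S) ≤ ‖S‖ ^ 2 * trAlong f τ := by
  obtain ⟨R, rfl⟩ : ∃ R, τ = adjoint R ∘L R := by
    simpa [star_eq_adjoint, mul_def] using
      CStarAlgebra.nonneg_iff_eq_star_mul_self.mp ((nonneg_iff_isPositive τ).mpr hτ)
  have hconj : S ∘L (adjoint R ∘L R) ∘L adjoint S
      = adjoint (R ∘L adjoint S) ∘L (R ∘L adjoint S) := by
    ext x; simp
  have hdiag (T : E →L[ℂ] E) :
      (fun i => RCLike.re ⟪f i, (adjoint T ∘L T) (f i)⟫_ℂ) = fun i => ‖T (f i)‖ ^ 2 :=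
    funext fun i => (apply_norm_sq_eq_inner_adjoint_right T (f i)).symm
  unfold IsTraceClass trAlong at *
  rw [hconj]
  simp only [absOp_of_isPositive (isPositive_adjoint_comp_self _), hdiag] at htc ⊢
  have hS : ‖S‖ ^ 2 = ((‖S‖₊ ^ 2 : ℝ≥0) : ℝ) := by push_cast; rfl
  rw [hS]
  refine summable_and_tsum_sq_norm_le_of_tsum_enorm_sq_le htc ?_
  calc ∑' i, ‖(R ∘L adjoint S) (f i)‖ₑ ^ 2 = ∑' i, ‖(S ∘L adjoint R) (f i)‖ₑ ^ 2 := by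
        rw [← f.tsum_enorm_adjoint_apply_sq f]; simp
    _ ≤ ∑' i, ‖S‖ₑ ^ 2 * ‖adjoint R (f i)‖ₑ ^ 2 := ENNReal.tsum_le_tsum fun i => by
        rw [← mul_pow]; gcongr; exact le_opENorm _ _
    _ = ((‖S‖₊ ^ 2 : ℝ≥0) : ℝ≥0∞) * ∑' i, ‖R (f i)‖ₑ ^ 2 := by
        rw [ENNReal.tsum_mul_left, f.tsum_enorm_adjoint_apply_sq f]; push_cast; rfl

end TraceClass

theorem IsSelfAdjoint.conj_le_conj {E : Type*} [NormedAddCommGroup E] [InnerProductSpace ℂ E]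
    [CompleteSpace E] {C X Y : E →L[ℂ] E} (hC : IsSelfAdjoint C) (h : X ≤ Y) :
    C ∘L X ∘L C ≤ C ∘L Y ∘L C := by
  simpa only [mul_def, comp_assoc] using hC.conjugate_le_conjugate h

namespace HilbertTensor

variable {HA HB H : Type*} [NormedAddCommGroup HA] [InnerProductSpace ℂ HA]
  [NormedAddCommGroup HB] [InnerProductSpace ℂ HB]
  [NormedAddCommGroup H] [InnerProductSpace ℂ H] (TP : HilbertTensor HA HB H)

theorem ext_clm {F G : H →L[ℂ] H} (h : ∀ a b, F (TP.tmul a b) = G (TP.tmul a b)) : F = G :=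
  ContinuousLinearMap.ext_on TP.dense_span (by rintro z ⟨a, b, rfl⟩; exact h a b)

theorem ext_inner_tmul {v w : H} (h : ∀ a b, ⟪TP.tmul a b, v⟫_ℂ = ⟪TP.tmul a b, w⟫_ℂ) :
    v = w := by
  have hinner : innerSL ℂ v = innerSL ℂ w :=
    ContinuousLinearMap.ext_on TP.dense_span <| by
      rintro z ⟨a, b, rfl⟩
      simp only [innerSL_apply_apply]
      rw [← inner_conj_symm, h, inner_conj_symm]
  exact ext_inner_right ℂ fun z => congr($hinner z)

theorem map_comp (S S' : HA →L[ℂ] HA) (T T' : HB →L[ℂ] HB) :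
    TP.map S T ∘L TP.map S' T' = TP.map (S ∘L S') (T ∘L T') :=
  TP.ext_clm fun a b => by simp [map_tmul]

theorem map_sub_left (S S' : HA →L[ℂ] HA) (T : HB →L[ℂ] HB) :
    TP.map (S - S') T = TP.map S T - TP.map S' T :=
  TP.ext_clm fun a b => by simp [map_tmul]

section Complete

variable [CompleteSpace HA] [CompleteSpace HB] [CompleteSpace H]

theorem adjoint_map (S : HA →L[ℂ] HA) (T : HB →L[ℂ] HB) :
    adjoint (TP.map S T) = TP.map (adjoint S) (adjoint T) :=
  TP.ext_clm fun a b => TP.ext_inner_tmul fun a' b' => by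
    simp only [adjoint_inner_right, map_tmul, inner_tmul]

theorem isSelfAdjoint_map {S : HA →L[ℂ] HA} {T : HB →L[ℂ] HB} (hS : IsSelfAdjoint S)
    (hT : IsSelfAdjoint T) : IsSelfAdjoint (TP.map S T) := by
  rw [isSelfAdjoint_iff, star_eq_adjoint, adjoint_map, ← star_eq_adjoint, ← star_eq_adjoint,
    hS.star_eq, hT.star_eq]

theorem map_nonneg {S : HA →L[ℂ] HA} {T : HB →L[ℂ] HB} (hS : 0 ≤ S) (hT : 0 ≤ T) :
    0 ≤ TP.map S T := by
  obtain ⟨a, rfl⟩ := CStarAlgebra.nonneg_iff_eq_star_mul_self.mp hS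
  obtain ⟨b, rfl⟩ := CStarAlgebra.nonneg_iff_eq_star_mul_self.mp hT
  have hsq : TP.map (star a * a) (star b * b) = star (TP.map a b) * TP.map a b := by
    simp only [star_eq_adjoint, adjoint_map, mul_def, map_comp]
  exact hsq ▸ star_mul_self_nonneg _

theorem map_le_map_left {S S' : HA →L[ℂ] HA} {T : HB →L[ℂ] HB} (hSS' : S ≤ S') (hT : 0 ≤ T) :
    TP.map S T ≤ TP.map S' T := by
  rw [← sub_nonneg, ← map_sub_left]
  exact TP.map_nonneg (sub_nonneg.mpr hSS') hT

theorem map_conj_le_map_one {QA : HA →L[ℂ] HA} {QB : HB →L[ℂ] HB} (hQA : IsStarProjection QA)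
    (hQB : IsStarProjection QB) {ρ : H →L[ℂ] H} {τ : HB →L[ℂ] HB} (hτ : 0 ≤ τ)
    (h : ρ ≤ TP.map 1 τ) :
    TP.map QA QB ∘L ρ ∘L TP.map QA QB ≤ TP.map 1 (QB ∘L τ ∘L QB) := by
  have hQA2 : QA ∘L QA = QA := hQA.isIdempotentElem.eq
  calc TP.map QA QB ∘L ρ ∘L TP.map QA QB
      ≤ TP.map QA QB ∘L TP.map 1 τ ∘L TP.map QA QB :=
        (TP.isSelfAdjoint_map hQA.isSelfAdjoint hQB.isSelfAdjoint).conj_le_conj h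
    _ = TP.map QA (QB ∘L τ ∘L QB) := by rw [map_comp, map_comp, one_def, id_comp, hQA2]
    _ ≤ TP.map 1 (QB ∘L τ ∘L QB) := TP.map_le_map_left hQA.le_one <| by
        simpa only [mul_def, comp_assoc] using hQB.isSelfAdjoint.conjugate_nonneg hτ

theorem LamB_map_conj_le {κ : Type*} (f : HilbertBasis κ ℂ HB) {QA : HA →L[ℂ] HA}
    {QB : HB →L[ℂ] HB} (hQA : IsStarProjection QA) (hQB : IsStarProjection QB)
    (ρ : H →L[ℂ] H) :
    LamB TP f (TP.map QA QB ∘L ρ ∘L TP.map QA QB) ≤ LamB TP f ρ := by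
  refine le_sInf ?_
  rintro _ ⟨τ, hτ, htc, hle, rfl⟩
  have hQB_adj : adjoint QB = QB := by rw [← star_eq_adjoint, hQB.isSelfAdjoint.star_eq]
  obtain ⟨htc', htr'⟩ := htc.conj_adjoint_and_trAlong_le hτ QB
  rw [hQB_adj] at htc' htr'
  have htr : trAlong f (QB ∘L τ ∘L QB) ≤ trAlong f τ :=
    htr'.trans <| mul_le_of_le_one_left (tsum_nonneg fun i => hτ.re_inner_nonneg_right _) <|
      pow_le_one₀ (norm_nonneg _) (IsStarProjection.norm_le QB hQB)
  have hle' := TP.map_conj_le_map_one hQA hQB ((nonneg_iff_isPositive τ).mpr hτ) hle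
  refine sInf_le_of_le ⟨QB ∘L τ ∘L QB, ?_, htc', hle', rfl⟩ (by exact_mod_cast htr)
  simpa only [hQB_adj] using hτ.conj_adjoint QB

end Complete

end HilbertTensor

theorem LamB_projected_monotone_general
    {HA HB H : Type*} [NormedAddCommGroup HA] [InnerProductSpace ℂ HA] [CompleteSpace HA]
    [NormedAddCommGroup HB] [InnerProductSpace ℂ HB] [CompleteSpace HB]
    [NormedAddCommGroup H] [InnerProductSpace ℂ H] [CompleteSpace H]
    (TP : HilbertTensor HA HB H)
    {κ : Type*} (f : HilbertBasis κ ℂ HB)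
    (ρ : H →L[ℂ] H)
    (PA : ℕ → HA →L[ℂ] HA) (PB : ℕ → HB →L[ℂ] HB)
    (hPA : ∀ k, IsOrthoProj (PA k)) (hPB : ∀ k, IsOrthoProj (PB k))
    (hmonoA : ∀ k k', k ≤ k' → PA k' ∘L PA k = PA k)
    (hmonoB : ∀ k k', k ≤ k' → PB k' ∘L PB k = PB k)
    (k k' : ℕ) (hkk : k' ≤ k)
    (σt : HB →L[ℂ] HB)
    (hdom : TP.map (PA k) (PB k) ∘L ρ ∘L TP.map (PA k) (PB k) ≤ TP.map (PA k) σt) :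
    (TP.map (PA k') (PB k') ∘L ρ ∘L TP.map (PA k') (PB k')
        ≤ TP.map (PA k') (PB k' ∘L σt ∘L PB k')) ∧
    LamB TP f (TP.map (PA k') (PB k') ∘L ρ ∘L TP.map (PA k') (PB k'))
      ≤ LamB TP f (TP.map (PA k) (PB k) ∘L ρ ∘L TP.map (PA k) (PB k)) ∧
    LamB TP f (TP.map (PA k) (PB k) ∘L ρ ∘L TP.map (PA k) (PB k)) ≤ LamB TP f ρ := by
  have hA (m : ℕ) : IsStarProjection (PA m) := ⟨(hPA m).2, (hPA m).1⟩
  have hB (m : ℕ) : IsStarProjection (PB m) := ⟨(hPB m).2, (hPB m).1⟩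
  have hA' : PA k' ∘L PA k = PA k' := ((hA k').le_tfae (hA k)).out 1 2 |>.mp (hmonoA k' k hkk)
  have hB' : PB k' ∘L PB k = PB k' := ((hB k').le_tfae (hB k)).out 1 2 |>.mp (hmonoB k' k hkk)
  set C := TP.map (PA k) (PB k)
  set C' := TP.map (PA k') (PB k')
  have hC'C : C' ∘L C = C' := by rw [TP.map_comp, hA', hB']
  have hCC' : C ∘L C' = C' := by rw [TP.map_comp, hmonoA k' k hkk, hmonoB k' k hkk]
  have hproj : C' ∘L (C ∘L ρ ∘L C) ∘L C' = C' ∘L ρ ∘L C' := by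
    simp only [comp_assoc, hCC']
    rw [← comp_assoc C' C, hC'C]
  have hdom' : C' ∘L ρ ∘L C' ≤ TP.map (PA k') (PB k' ∘L σt ∘L PB k') := calc
    C' ∘L ρ ∘L C' = C' ∘L (C ∘L ρ ∘L C) ∘L C' := hproj.symm
    _ ≤ C' ∘L TP.map (PA k) σt ∘L C' :=
      (TP.isSelfAdjoint_map (hA k').isSelfAdjoint (hB k').isSelfAdjoint).conj_le_conj hdom
    _ = TP.map (PA k') (PB k' ∘L σt ∘L PB k') := by
      rw [TP.map_comp, TP.map_comp, hmonoA k' k hkk, hmonoA k' k' le_rfl]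
  exact ⟨hdom', hproj ▸ TP.LamB_map_conj_le f (hA k') (hB k') _,
    TP.LamB_map_conj_le f (hA k) (hB k) ρ⟩

/-- If `P_k^A ⊗ σ̃_B ≥ ρ_AB^k` then for `k' ≤ k`,
`P_{k'}^A ⊗ (P_{k'}^B σ̃_B P_{k'}^B) ≥ ρ_AB^{k'}`; consequently
`Λ(ρ_AB^{k'}|B) ≤ Λ(ρ_AB^k|B) ≤ Λ(ρ_AB|B)`. -/
theorem LamB_projected_monotone
    {HA HB H : Type*} [NormedAddCommGroup HA] [InnerProductSpace ℂ HA] [CompleteSpace HA]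
    [TopologicalSpace.SeparableSpace HA]
    [NormedAddCommGroup HB] [InnerProductSpace ℂ HB] [CompleteSpace HB]
    [TopologicalSpace.SeparableSpace HB]
    [NormedAddCommGroup H] [InnerProductSpace ℂ H] [CompleteSpace H]
    [TopologicalSpace.SeparableSpace H]
    (TP : HilbertTensor HA HB H)
    {ι κ : Type*} (e : HilbertBasis ι ℂ H) (f : HilbertBasis κ ℂ HB)
    (ρ : H →L[ℂ] H) (σ : HB →L[ℂ] HB)
    (hρ : ρ.IsPositive) (hρtc : IsTraceClass e ρ) (hρtr : trAlong e ρ = 1)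
    (hσ : σ.IsPositive) (hσtc : IsTraceClass f σ) (hσtr : trAlong f σ = 1)
    (PA : ℕ → HA →L[ℂ] HA) (PB : ℕ → HB →L[ℂ] HB)
    (hPA : ∀ k, IsOrthoProj (PA k)) (hPB : ∀ k, IsOrthoProj (PB k))
    (hfinA : ∀ k, FiniteDimensional ℂ (LinearMap.range ((PA k : HA →ₗ[ℂ] HA))))
    (hfinB : ∀ k, FiniteDimensional ℂ (LinearMap.range ((PB k : HB →ₗ[ℂ] HB))))
    (hmonoA : ∀ k k', k ≤ k' → PA k' ∘L PA k = PA k)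
    (hmonoB : ∀ k k', k ≤ k' → PB k' ∘L PB k = PB k)
    (k k' : ℕ) (hkk : k' ≤ k)
    (σt : HB →L[ℂ] HB) (hσt : σt.IsPositive) (hσttc : IsTraceClass f σt)
    (hdom : TP.map (PA k) (PB k) ∘L ρ ∘L TP.map (PA k) (PB k) ≤ TP.map (PA k) σt) :
    (TP.map (PA k') (PB k') ∘L ρ ∘L TP.map (PA k') (PB k')
        ≤ TP.map (PA k') (PB k' ∘L σt ∘L PB k')) ∧
    LamB TP f (TP.map (PA k') (PB k') ∘L ρ ∘L TP.map (PA k') (PB k'))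
      ≤ LamB TP f (TP.map (PA k) (PB k) ∘L ρ ∘L TP.map (PA k) (PB k)) ∧
    LamB TP f (TP.map (PA k) (PB k) ∘L ρ ∘L TP.map (PA k) (PB k)) ≤ LamB TP f ρ :=
  LamB_projected_monotone_general TP f ρ PA PB hPA hPB hmonoA hmonoB k k' hkk σt hdom
end
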